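/- Let n ≥ 2 and 0 < λ ≤ Λ ≤ 3λ, let α ∈ (0,1), ε > 0, C ≥ 1, N ∈ ℕ with N ≥ 2, and let f₂ be the annular step function built from these constants. Let A(x), A(z) ∈ 𝒜(λ,Λ) and let x, z ∈ ℝⁿ satisfy (x−z)/|x−z| = e₁ and (1/2)√λ·ε < |x−z| ≤ N√λ·ε. Define ν_x := A(x)^{−1/2}e₁ and ν_z := A(z)^{−1/2}e₁, and let Q ∈ O(n) be any orthogonal matrix with Q(ν_x/|ν_x|) = −ν_z/|ν_z|. Then ⨍_𝔹 f₂(x + εA(x)^{1/2} y, z + εA(z)^{1/2} Q y) dy ≥ γ C² f₂(x,z), where γ := 3^{−n/2}·(1/300)^n ∈ (0,1) depends only on n. -/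

import Mathlib

open MeasureTheory Matrix

noncomputable section

abbrev EucSp (n : ℕ) := EuclideanSpace ℝ (Fin n)

/-- Principal square root of a positive semidefinite matrix (zero otherwise). -/
noncomputable def msqrt {n : ℕ} (A : Matrix (Fin n) (Fin n) ℝ) : Matrix (Fin n) (Fin n) ℝ :=
  open scoped Classical in
  if h : A.PosSemidef then
    (h.1.eigenvectorUnitary.1 * diagonal ((↑) ∘ (√·) ∘ h.1.eigenvalues) *
      (star h.1.eigenvectorUnitary : Matrix (Fin n) (Fin n) ℝ)) else 0

/-- `A ∈ 𝒜(λ,Λ)`: symmetric and uniformly elliptic. -/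
def UnifElliptic {n : ℕ} (lam Lam : ℝ) (A : Matrix (Fin n) (Fin n) ℝ) : Prop :=
  A.IsSymm ∧ ∀ ξ : Fin n → ℝ,
    lam * (ξ ⬝ᵥ ξ) ≤ ξ ⬝ᵥ A.mulVec ξ ∧ ξ ⬝ᵥ A.mulVec ξ ≤ Lam * (ξ ⬝ᵥ ξ)

/-- Membership in the orthogonal group `O(n)`. -/
def IsOrthMat {n : ℕ} (Q : Matrix (Fin n) (Fin n) ℝ) : Prop :=
  Q * Qᵀ = 1 ∧ Qᵀ * Q = 1

/-- Matrix acting on Euclidean space. -/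
noncomputable def mvE {n : ℕ} (M : Matrix (Fin n) (Fin n) ℝ) (y : EucSp n) : EucSp n :=
  (EuclideanSpace.equiv (Fin n) ℝ).symm (M.mulVec ((EuclideanSpace.equiv (Fin n) ℝ) y))

/-- The ellipsoid `x + ε A^{1/2} 𝔹`. -/
noncomputable def ellipsoid {n : ℕ} (ε : ℝ) (M : Matrix (Fin n) (Fin n) ℝ) (x : EucSp n) :
    Set (EucSp n) :=
  (fun y => x + ε • mvE (msqrt M) y) '' Metric.ball (0 : EucSp n) 1

/-- The matrix `J_α = diag(α-1, 1, …, 1)`. -/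
noncomputable def Jmat (n : ℕ) (α : ℝ) : Matrix (Fin n) (Fin n) ℝ :=
  Matrix.diagonal (fun i => if (i : ℕ) = 0 then α - 1 else 1)

/-- Reflection in the first coordinate axis. -/
noncomputable def J0 (n : ℕ) : Matrix (Fin n) (Fin n) ℝ :=
  Matrix.diagonal (fun i => if (i : ℕ) = 0 then -1 else 1)

/-- The first standard basis vector `e₁`. -/
noncomputable def e1 (n : ℕ) : EucSp n :=
  (EuclideanSpace.equiv (Fin n) ℝ).symm (fun i => if (i : ℕ) = 0 then 1 else 0)

/-- `f₁(x,z) = C|x-z|^α + C̃|x+z|²`. -/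
noncomputable def f1 {n : ℕ} (α C Ct : ℝ) (x z : EucSp n) : ℝ :=
  C * ‖x - z‖ ^ α + Ct * ‖x + z‖ ^ 2

/-- The annular step function `f₂`. -/
noncomputable def f2 {n : ℕ} (α C lam ε : ℝ) (N : ℕ) (x z : EucSp n) : ℝ :=
  if ‖x - z‖ / (Real.sqrt lam * ε) > (N : ℝ) then 0
  else C ^ (2 * (2 * N - ⌈2 * ‖x - z‖ / (Real.sqrt lam * ε)⌉₊)) * ε ^ α

/-!
Along the unit vector `u = ν_x / |ν_x|` the two coupled points `x + ε A(x)^{1/2} y` and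
`z + ε A(z)^{1/2} Q y` move in opposite directions along `e₁` (this is what the condition on `Q`
achieves), so their distance decreases at rate at least `2 √λ ε`. At a point `y₀` with
`|y₀| ≤ 3/8` it has decreased by exactly `(3/4) √λ ε`, which lowers the annulus index
`⌈2 |x - z| / (√λ ε)⌉` by one with room to spare. Both square roots are `√(3λ)`-Lipschitz, so this
persists on the ball of radius `1 / (300 √3)` around `y₀`, where `f₂` is therefore at least
`C² f₂(x, z)`; that ball fills the fraction `(1 / (300 √3))ⁿ = γ` of the unit ball.
-/

open scoped MatrixOrder RealInnerProductSpace
open Metric Module WithLp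

theorem mul_le_setAverage_ball {E : Type*} [NormedAddCommGroup E] [NormedSpace ℝ E]
    [FiniteDimensional ℝ E] [MeasurableSpace E] [BorelSpace E] (μ : Measure E)
    [μ.IsAddHaarMeasure] {f : E → ℝ} {c y₀ : E} {r ρ m : ℝ} (hρ : 0 < ρ)
    (hsub : ball y₀ ρ ⊆ ball c r) (hf : IntegrableOn f (ball c r) μ)
    (hf0 : ∀ y ∈ ball c r, 0 ≤ f y) (hm : ∀ y ∈ ball y₀ ρ, m ≤ f y) :
    (ρ / r) ^ finrank ℝ E * m ≤ ⨍ y in ball c r, f y ∂μ := by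
  have hr : 0 < r := pos_of_mem_ball (hsub (mem_ball_self hρ))
  have hB : 0 < μ.real (ball c r) :=
    ENNReal.toReal_pos (measure_ball_pos μ c hr).ne' measure_ball_lt_top.ne
  have hvol : μ.real (ball y₀ ρ) = (ρ / r) ^ finrank ℝ E * μ.real (ball c r) := by
    simp only [measureReal_def, Measure.addHaar_ball_of_pos μ _ hρ,
      Measure.addHaar_ball_of_pos μ _ hr, ENNReal.toReal_mul,
      ENNReal.toReal_ofReal (pow_nonneg hρ.le _), ENNReal.toReal_ofReal (pow_nonneg hr.le _)]
    rw [div_pow, ← mul_assoc, div_mul_cancel₀ _ (pow_pos hr _).ne']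
  calc (ρ / r) ^ finrank ℝ E * m = (μ.real (ball c r))⁻¹ * (μ.real (ball y₀ ρ) • m) := by
        rw [hvol, smul_eq_mul]; field_simp
    _ ≤ (μ.real (ball c r))⁻¹ * ∫ y in ball y₀ ρ, f y ∂μ := by
        rw [← setIntegral_const]
        exact mul_le_mul_of_nonneg_left (setIntegral_mono_on
          (integrableOn_const measure_ball_lt_top.ne) (hf.mono_set hsub) measurableSet_ball hm)
          (inv_nonneg.2 hB.le)
    _ ≤ (μ.real (ball c r))⁻¹ * ∫ y in ball c r, f y ∂μ :=
        mul_le_mul_of_nonneg_left (setIntegral_mono_set hf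
          (ae_restrict_of_forall_mem measurableSet_ball hf0) hsub.eventuallyLE) (inv_nonneg.2 hB.le)
    _ = ⨍ y in ball c r, f y ∂μ := by rw [setAverage_eq, smul_eq_mul]

theorem abs_sub_add_le_ceil_sub_one {r : ℝ} (hr : 1 < r) :
    |r - 3 / 2| + 1 / 75 ≤ ⌈r⌉₊ - 1 := by
  have hi : (2 : ℝ) ≤ ⌈r⌉₊ := by
    have : 1 < ⌈r⌉₊ := Nat.lt_ceil.2 (by exact_mod_cast hr)
    exact_mod_cast this
  have := Nat.le_ceil r
  cases abs_cases (r - 3 / 2) <;> linarith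

theorem mvE_eq_toEuclideanCLM {n : ℕ} (M : Matrix (Fin n) (Fin n) ℝ) :
    mvE M = toEuclideanCLM (𝕜 := ℝ) M := rfl

theorem norm_mvE_sq {n : ℕ} (M : Matrix (Fin n) (Fin n) ℝ) (y : EucSp n) :
    ‖mvE M y‖ ^ 2 = ofLp y ⬝ᵥ (Mᵀ * M) *ᵥ ofLp y := by
  rw [mvE_eq_toEuclideanCLM, ← real_inner_self_eq_norm_sq,
    ← ContinuousLinearMap.adjoint_inner_right, ← ContinuousLinearMap.star_eq_adjoint, ← map_star,
    ← mul_apply_eq_comp, ← map_mul, inner_toEuclideanCLM, star_eq_conjTranspose,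
    conjTranspose_eq_transpose_of_trivial]

theorem norm_sq_eq_dotProduct {n : ℕ} (y : EucSp n) : ‖y‖ ^ 2 = ofLp y ⬝ᵥ ofLp y := by
  rw [← real_inner_self_eq_norm_sq, EuclideanSpace.inner_eq_star_dotProduct, star_trivial]

theorem IsOrthMat.norm_mvE {n : ℕ} {Q : Matrix (Fin n) (Fin n) ℝ} (hQ : IsOrthMat Q)
    (y : EucSp n) : ‖mvE Q y‖ = ‖y‖ := by
  rw [← sq_eq_sq₀ (norm_nonneg _) (norm_nonneg _), norm_mvE_sq, hQ.2, one_mulVec,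
    norm_sq_eq_dotProduct]

theorem mvE_smul {n : ℕ} (M : Matrix (Fin n) (Fin n) ℝ) (c : ℝ) (y : EucSp n) :
    mvE M (c • y) = c • mvE M y :=
  map_smul (toEuclideanCLM (𝕜 := ℝ) M) c y

theorem mvE_sub {n : ℕ} (M : Matrix (Fin n) (Fin n) ℝ) (y y' : EucSp n) :
    mvE M (y - y') = mvE M y - mvE M y' :=
  map_sub (toEuclideanCLM (𝕜 := ℝ) M) y y'

@[fun_prop]
theorem continuous_mvE {n : ℕ} (M : Matrix (Fin n) (Fin n) ℝ) : Continuous (mvE M) :=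
  (toEuclideanCLM (𝕜 := ℝ) M).continuous

theorem mvE_mul {n : ℕ} (M M' : Matrix (Fin n) (Fin n) ℝ) (y : EucSp n) :
    mvE (M * M') y = mvE M (mvE M' y) := by
  rw [mvE_eq_toEuclideanCLM, map_mul, mul_apply_eq_comp]; rfl

theorem norm_smul_mvE_sub_smul_mvE_le {n : ℕ} {M₁ M₂ : Matrix (Fin n) (Fin n) ℝ} {K ε : ℝ}
    (hε : 0 ≤ ε) (hM₁ : ∀ w, ‖mvE M₁ w‖ ≤ K * ‖w‖) (hM₂ : ∀ w, ‖mvE M₂ w‖ ≤ K * ‖w‖)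
    (w : EucSp n) : ‖ε • mvE M₁ w - ε • mvE M₂ w‖ ≤ 2 * K * ε * ‖w‖ := by
  rw [← smul_sub, norm_smul, Real.norm_of_nonneg hε]
  calc ε * ‖mvE M₁ w - mvE M₂ w‖ ≤ ε * (K * ‖w‖ + K * ‖w‖) := by
        gcongr; exact (norm_sub_le _ _).trans (add_le_add (hM₁ w) (hM₂ w))
    _ = 2 * K * ε * ‖w‖ := by ring

theorem msqrt_eq_sqrt {n : ℕ} {A : Matrix (Fin n) (Fin n) ℝ} (hA : A.PosSemidef) :
    msqrt A = CFC.sqrt A := by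
  rw [msqrt, dif_pos hA, CFC.sqrt_eq_real_sqrt A hA.nonneg, cfcₙ_eq_cfc, hA.1.cfc_eq]
  rfl

theorem msqrt_transpose_mul_self {n : ℕ} {A : Matrix (Fin n) (Fin n) ℝ} (hA : A.PosSemidef) :
    (msqrt A)ᵀ * msqrt A = A := by
  rw [msqrt_eq_sqrt hA, ← conjTranspose_eq_transpose_of_trivial, ← star_eq_conjTranspose,
    (CFC.sqrt_nonneg A).isSelfAdjoint.star_eq, CFC.sqrt_mul_sqrt_self A hA.nonneg]

theorem isUnit_msqrt {n : ℕ} {A : Matrix (Fin n) (Fin n) ℝ} (hA : A.PosDef) : IsUnit (msqrt A) := by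
  refine isUnit_of_mul_isUnit_left (y := msqrt A) ?_
  rw [msqrt_eq_sqrt hA.posSemidef, CFC.sqrt_mul_sqrt_self A hA.posSemidef.nonneg]
  exact hA.isUnit

theorem mvE_msqrt_mvE_inv {n : ℕ} {A : Matrix (Fin n) (Fin n) ℝ} (hA : A.PosDef)
    (w : EucSp n) : mvE (msqrt A) (mvE (msqrt A)⁻¹ w) = w := by
  rw [← mvE_mul, mul_nonsing_inv _ ((isUnit_iff_isUnit_det _).1 (isUnit_msqrt hA)),
    mvE_eq_toEuclideanCLM, map_one, one_apply_eq_self]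

theorem mvE_msqrt_inv_ne_zero {n : ℕ} {A : Matrix (Fin n) (Fin n) ℝ} (hA : A.PosDef)
    {w : EucSp n} (hw : w ≠ 0) : mvE (msqrt A)⁻¹ w ≠ 0 := by
  intro h0
  have := mvE_msqrt_mvE_inv hA w
  rw [h0, mvE_eq_toEuclideanCLM, map_zero] at this
  exact hw this.symm

section Elliptic

variable {n : ℕ} {lam Lam : ℝ} {A : Matrix (Fin n) (Fin n) ℝ}

theorem UnifElliptic.posDef (h : UnifElliptic lam Lam A) (hlam : 0 < lam) : A.PosDef := by
  refine PosDef.of_dotProduct_mulVec_pos ?_ fun v hv => ?_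
  · rw [IsHermitian, conjTranspose_eq_transpose_of_trivial, h.1]
  · have hv : 0 < v ⬝ᵥ v := by simpa using dotProduct_star_self_pos_iff.2 hv
    simpa using lt_of_lt_of_le (mul_pos hlam hv) (h.2 v).1

theorem UnifElliptic.norm_mvE_msqrt_sq (h : UnifElliptic lam Lam A) (hlam : 0 < lam) (y : EucSp n) :
    ‖mvE (msqrt A) y‖ ^ 2 = ofLp y ⬝ᵥ A *ᵥ ofLp y := by
  rw [norm_mvE_sq, msqrt_transpose_mul_self (h.posDef hlam).posSemidef]

theorem UnifElliptic.sqrt_mul_norm_le (h : UnifElliptic lam Lam A) (hlam : 0 < lam) (y : EucSp n) :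
    Real.sqrt lam * ‖y‖ ≤ ‖mvE (msqrt A) y‖ := by
  rw [← Real.sqrt_sq (norm_nonneg (mvE _ y)), ← Real.sqrt_sq (norm_nonneg y),
    ← Real.sqrt_mul hlam.le, h.norm_mvE_msqrt_sq hlam, norm_sq_eq_dotProduct]
  exact Real.sqrt_le_sqrt (h.2 _).1

theorem UnifElliptic.norm_mvE_msqrt_le (h : UnifElliptic lam Lam A) (hlam : 0 < lam) (y : EucSp n) :
    ‖mvE (msqrt A) y‖ ≤ Real.sqrt Lam * ‖y‖ := by
  rw [← Real.sqrt_sq (norm_nonneg (mvE _ y)), ← Real.sqrt_sq (norm_nonneg y),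
    ← Real.sqrt_mul' _ (sq_nonneg _), h.norm_mvE_msqrt_sq hlam, norm_sq_eq_dotProduct]
  exact Real.sqrt_le_sqrt (h.2 _).2

theorem UnifElliptic.sqrt_le_inv_norm_mvE_inv (h : UnifElliptic lam Lam A) (hlam : 0 < lam)
    {e : EucSp n} (he : ‖e‖ = 1) : Real.sqrt lam ≤ ‖mvE (msqrt A)⁻¹ e‖⁻¹ := by
  have hν := h.sqrt_mul_norm_le hlam (mvE (msqrt A)⁻¹ e)
  rw [mvE_msqrt_mvE_inv (h.posDef hlam), he] at hν
  have hpos := norm_pos_iff.2 (mvE_msqrt_inv_ne_zero (h.posDef hlam)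
    (norm_ne_zero_iff.1 (he ▸ one_ne_zero)))
  simpa using (le_inv_mul_iff₀' hpos (b := 1)).2 (by simpa using hν)

end Elliptic

theorem measurable_f2 {n : ℕ} (α C lam ε : ℝ) (N : ℕ) :
    Measurable fun p : EucSp n × EucSp n => f2 α C lam ε N p.1 p.2 := by
  have hr : Measurable fun p : EucSp n × EucSp n => 2 * ‖p.1 - p.2‖ / (Real.sqrt lam * ε) := by
    fun_prop
  unfold f2
  refine Measurable.ite (measurableSet_lt measurable_const (by fun_prop)) measurable_const ?_
  exact ((measurable_from_top (f := fun k : ℕ => C ^ (2 * (2 * N - k)))).comp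
    (Nat.measurable_ceil.comp hr)).mul_const _

theorem f2_nonneg {n : ℕ} {α C lam ε : ℝ} (N : ℕ) (hC : 0 ≤ C) (hε : 0 ≤ ε) (x z : EucSp n) :
    0 ≤ f2 α C lam ε N x z := by
  unfold f2; split_ifs <;> positivity

theorem f2_le {n : ℕ} {α C lam ε : ℝ} (N : ℕ) (hC : 1 ≤ C) (hε : 0 ≤ ε) (x z : EucSp n) :
    f2 α C lam ε N x z ≤ C ^ (4 * N) * ε ^ α := by
  unfold f2
  split_ifs
  · positivity
  · exact mul_le_mul_of_nonneg_right (pow_le_pow_right₀ hC (by omega)) (by positivity)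

theorem integrableOn_f2_comp {n : ℕ} {X : Type*} [MeasurableSpace X] {μ : Measure X} {s : Set X}
    {α C lam ε : ℝ} (N : ℕ) (hC : 1 ≤ C) (hε : 0 ≤ ε) {g h : X → EucSp n}
    (hg : Measurable g) (hh : Measurable h) (hs : μ s ≠ ⊤) :
    IntegrableOn (fun y => f2 α C lam ε N (g y) (h y)) s μ := by
  refine Measure.integrableOn_of_bounded (M := C ^ (4 * N) * ε ^ α) hs
    ((measurable_f2 α C lam ε N).comp (hg.prodMk hh)).aestronglyMeasurable
    (Filter.Eventually.of_forall fun y => ?_)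
  rw [Real.norm_of_nonneg (f2_nonneg N (by linarith) hε _ _)]
  exact f2_le N hC hε _ _

theorem sq_mul_f2_le_f2 {n : ℕ} {α C lam ε : ℝ} {N : ℕ} (hC : 1 ≤ C) (hε : 0 < ε)
    {x z p q : EucSp n} (hxz : ‖x - z‖ / (Real.sqrt lam * ε) ≤ N)
    (hpq : 2 * ‖p - q‖ / (Real.sqrt lam * ε) ≤ ⌈2 * ‖x - z‖ / (Real.sqrt lam * ε)⌉₊ - 1) :
    C ^ 2 * f2 α C lam ε N x z ≤ f2 α C lam ε N p q := by
  set i := ⌈2 * ‖x - z‖ / (Real.sqrt lam * ε)⌉₊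
  have hpq0 : 0 ≤ 2 * ‖p - q‖ / (Real.sqrt lam * ε) := by positivity
  have hi : 1 ≤ i := by exact_mod_cast (by linarith : (1 : ℝ) ≤ i)
  have hiN : i ≤ 2 * N := Nat.ceil_le.2 (by push_cast; rw [mul_div_assoc]; linarith)
  have hj : ⌈2 * ‖p - q‖ / (Real.sqrt lam * ε)⌉₊ ≤ i - 1 :=
    Nat.ceil_le.2 (by push_cast [hi]; exact hpq)
  have hpqN : ¬ ‖p - q‖ / (Real.sqrt lam * ε) > N := by
    rw [mul_div_assoc] at hpq
    have : (i : ℝ) ≤ 2 * N := by exact_mod_cast hiN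
    push Not; linarith
  rw [f2, f2, if_neg (not_lt.2 hxz), if_neg hpqN, ← mul_assoc, ← pow_add]
  exact mul_le_mul_of_nonneg_right (pow_le_pow_right₀ hC (by omega)) (by positivity)

theorem sq_mul_f2_le_f2_of_norm_sub_le {n : ℕ} {α C lam ε : ℝ} {N : ℕ} (hC : 1 ≤ C)
    (hε : 0 < ε) (hlam : 0 < lam) {x z e p q : EucSp n} (he : ‖x - z‖⁻¹ • (x - z) = e)
    (hlo : 1 / 2 * Real.sqrt lam * ε < ‖x - z‖) (hhi : ‖x - z‖ ≤ N * Real.sqrt lam * ε)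
    (hpq : ‖p - q - (x - z - (3 / 4 * (Real.sqrt lam * ε)) • e)‖ ≤ Real.sqrt lam * ε / 150) :
    C ^ 2 * f2 α C lam ε N x z ≤ f2 α C lam ε N p q := by
  set X := Real.sqrt lam * ε
  set d := ‖x - z‖
  have hX : 0 < X := by positivity
  have hd : 0 < d := by linarith
  have hxz : x - z = d • e := by rw [← he, smul_smul, mul_inv_cancel₀ hd.ne', one_smul]
  have hshrink : ‖x - z - (3 / 4 * X) • e‖ = |2 * d / X - 3 / 2| * X / 2 := by
    rw [hxz, ← sub_smul, norm_smul, ← he, norm_smul, norm_inv, norm_norm, inv_mul_cancel₀ hd.ne',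
      Real.norm_eq_abs, mul_one, mul_div_assoc, ← abs_of_pos (half_pos hX), ← abs_mul]
    congr 1
    field_simp
    ring
  have hnorm : ‖p - q‖ ≤ |2 * d / X - 3 / 2| * X / 2 + X / 150 := by
    have := norm_le_norm_add_norm_sub' (p - q) (x - z - (3 / 4 * X) • e)
    linarith
  have hceil := abs_sub_add_le_ceil_sub_one (r := 2 * d / X) (by rw [lt_div_iff₀ hX]; linarith)
  refine sq_mul_f2_le_f2 hC hε (by rw [div_le_iff₀ hX]; linarith) ?_
  rw [div_le_iff₀ hX]
  nlinarith

theorem exists_ball_sq_mul_f2_le {n : ℕ} {α C lam ε : ℝ} {N : ℕ} (hC : 1 ≤ C) (hε : 0 < ε)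
    (hlam : 0 < lam) {x z e : EucSp n} (he : ‖x - z‖⁻¹ • (x - z) = e)
    (hlo : 1 / 2 * Real.sqrt lam * ε < ‖x - z‖) (hhi : ‖x - z‖ ≤ N * Real.sqrt lam * ε)
    {M₁ M₂ : Matrix (Fin n) (Fin n) ℝ} {u : EucSp n} {a b : ℝ} (hu : ‖u‖ = 1)
    (ha : Real.sqrt lam ≤ a) (hb : Real.sqrt lam ≤ b)
    (h₁ : mvE M₁ u = a • e) (h₂ : mvE M₂ u = -(b • e))
    (hM₁ : ∀ w, ‖mvE M₁ w‖ ≤ Real.sqrt 3 * Real.sqrt lam * ‖w‖)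
    (hM₂ : ∀ w, ‖mvE M₂ w‖ ≤ Real.sqrt 3 * Real.sqrt lam * ‖w‖) :
    ∃ y₀ : EucSp n, ball y₀ ((Real.sqrt 3)⁻¹ * (1 / 300)) ⊆ ball 0 1 ∧
      ∀ y ∈ ball y₀ ((Real.sqrt 3)⁻¹ * (1 / 300)),
        C ^ 2 * f2 α C lam ε N x z ≤ f2 α C lam ε N (x + ε • mvE M₁ y) (z + ε • mvE M₂ y) := by
  set s := Real.sqrt lam
  have hs : 0 < s := Real.sqrt_pos.2 hlam
  have hab : 0 < a + b := by linarith
  set t := -(3 * s) / (4 * (a + b))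
  have hy₀ : ‖t • u‖ ≤ 3 / 8 := by
    rw [norm_smul, hu, mul_one, Real.norm_eq_abs, abs_div, abs_neg, abs_of_pos (by positivity),
      abs_of_pos (by positivity), div_le_iff₀ (by positivity)]
    linarith
  have hshift : ε • mvE M₁ (t • u) - ε • mvE M₂ (t • u) = -(3 / 4 * (s * ε)) • e := by
    have hscalar : ε * t * (a + b) = -(3 / 4 * (s * ε)) := by
      simp only [t]
      field_simp
    rw [mvE_smul, mvE_smul, h₁, h₂, ← hscalar]
    module
  refine ⟨t • u, ball_subset_ball' ?_,
    fun y hy => sq_mul_f2_le_f2_of_norm_sub_le hC hε hlam he hlo hhi ?_⟩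
  · have : (Real.sqrt 3)⁻¹ ≤ 1 := inv_le_one_of_one_le₀ (Real.one_le_sqrt.2 (by norm_num))
    rw [dist_zero_right]
    linarith
  · have hdiff : x + ε • mvE M₁ y - (z + ε • mvE M₂ y) - (x - z - (3 / 4 * (s * ε)) • e) =
        ε • mvE M₁ (y - t • u) - ε • mvE M₂ (y - t • u) := by
      rw [mvE_sub, mvE_sub]
      linear_combination (norm := module) hshift
    rw [hdiff]
    calc _ ≤ 2 * (Real.sqrt 3 * s) * ε * ‖y - t • u‖ :=
          norm_smul_mvE_sub_smul_mvE_le hε.le hM₁ hM₂ _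
      _ ≤ 2 * (Real.sqrt 3 * s) * ε * ((Real.sqrt 3)⁻¹ * (1 / 300)) := by
          gcongr; exact (mem_ball_iff_norm.1 hy).le
      _ = s * ε / 150 := by
          have : Real.sqrt 3 ≠ 0 := by positivity
          field_simp
          ring

theorem stmt11_general {n : ℕ}
    (lam Lam : ℝ) (hlam : 0 < lam) (h3 : Lam ≤ 3 * lam)
    (α : ℝ)
    (ε : ℝ) (hε : 0 < ε) (C : ℝ) (hC : 1 ≤ C) (N : ℕ)
    (Ax Az : Matrix (Fin n) (Fin n) ℝ)
    (hAx : UnifElliptic lam Lam Ax) (hAz : UnifElliptic lam Lam Az)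
    (x z : EucSp n) (hxz : ‖x - z‖⁻¹ • (x - z) = e1 n)
    (hlo : (1 / 2) * Real.sqrt lam * ε < ‖x - z‖)
    (hhi : ‖x - z‖ ≤ (N : ℝ) * Real.sqrt lam * ε)
    (Q : Matrix (Fin n) (Fin n) ℝ) (hQ : IsOrthMat Q)
    (hQv : mvE Q (‖mvE (msqrt Ax)⁻¹ (e1 n)‖⁻¹ • mvE (msqrt Ax)⁻¹ (e1 n)) =
        -(‖mvE (msqrt Az)⁻¹ (e1 n)‖⁻¹ • mvE (msqrt Az)⁻¹ (e1 n))) :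
    (⨍ y in Metric.ball (0 : EucSp n) 1,
        f2 α C lam ε N (x + ε • mvE (msqrt Ax) y) (z + ε • mvE (msqrt Az * Q) y)) ≥
      ((3 : ℝ) ^ (-(n : ℝ) / 2) * (1 / 300) ^ n) * C ^ 2 * f2 α C lam ε N x z := by
  have he : ‖e1 n‖ = 1 := by
    rw [← hxz, norm_smul, norm_inv, norm_norm,
      inv_mul_cancel₀ (lt_of_le_of_lt (by positivity) hlo).ne']
  have hLam : Real.sqrt Lam ≤ Real.sqrt 3 * Real.sqrt lam := by
    rw [← Real.sqrt_mul zero_le_three]; exact Real.sqrt_le_sqrt h3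
  set νx := mvE (msqrt Ax)⁻¹ (e1 n)
  obtain ⟨y₀, hsub, hball⟩ := exists_ball_sq_mul_f2_le (α := α) (N := N) hC hε hlam hxz hlo hhi
    (M₁ := msqrt Ax) (M₂ := msqrt Az * Q) (u := ‖νx‖⁻¹ • νx)
    (norm_smul_inv_norm (mvE_msqrt_inv_ne_zero (hAx.posDef hlam)
      (norm_ne_zero_iff.1 (he ▸ one_ne_zero))))
    (hAx.sqrt_le_inv_norm_mvE_inv hlam he) (hAz.sqrt_le_inv_norm_mvE_inv hlam he)
    (by rw [mvE_smul, mvE_msqrt_mvE_inv (hAx.posDef hlam)])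
    (by rw [mvE_mul, hQv, ← neg_smul, mvE_smul, mvE_msqrt_mvE_inv (hAz.posDef hlam), neg_smul])
    (fun w => (hAx.norm_mvE_msqrt_le hlam w).trans (by gcongr))
    (fun w => by
      rw [mvE_mul, ← hQ.norm_mvE w]
      exact (hAz.norm_mvE_msqrt_le hlam _).trans (by gcongr))
  calc (3 : ℝ) ^ (-(n : ℝ) / 2) * (1 / 300) ^ n * C ^ 2 * f2 α C lam ε N x z
      = ((Real.sqrt 3)⁻¹ * (1 / 300) / 1) ^ finrank ℝ (EucSp n) * (C ^ 2 * f2 α C lam ε N x z) := by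
        rw [finrank_euclideanSpace_fin, div_one, Real.rpow_div_two_eq_sqrt _ zero_le_three,
          Real.rpow_neg (Real.sqrt_nonneg 3), Real.rpow_natCast, ← inv_pow, ← mul_pow]
        ring
    _ ≤ _ := mul_le_setAverage_ball volume (by positivity) hsub
        (integrableOn_f2_comp N hC hε.le (by fun_prop) (by fun_prop) measure_ball_lt_top.ne)
        (fun y _ => f2_nonneg N (by linarith) hε.le _ _) hball

/-- the medium distance coupling estimate for the annular step
function `f₂` (Lemma 5.2). -/
theorem stmt11 {n : ℕ} (hn : 2 ≤ n)
    (lam Lam : ℝ) (hlam : 0 < lam) (hlL : lam ≤ Lam) (h3 : Lam ≤ 3 * lam)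
    (α : ℝ) (hα : α ∈ Set.Ioo (0 : ℝ) 1)
    (ε : ℝ) (hε : 0 < ε) (C : ℝ) (hC : 1 ≤ C) (N : ℕ) (hN : 2 ≤ N)
    (Ax Az : Matrix (Fin n) (Fin n) ℝ)
    (hAx : UnifElliptic lam Lam Ax) (hAz : UnifElliptic lam Lam Az)
    (x z : EucSp n) (hxz : ‖x - z‖⁻¹ • (x - z) = e1 n)
    (hlo : (1 / 2) * Real.sqrt lam * ε < ‖x - z‖)
    (hhi : ‖x - z‖ ≤ (N : ℝ) * Real.sqrt lam * ε)
    (Q : Matrix (Fin n) (Fin n) ℝ) (hQ : IsOrthMat Q)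
    (hQv : mvE Q (‖mvE (msqrt Ax)⁻¹ (e1 n)‖⁻¹ • mvE (msqrt Ax)⁻¹ (e1 n)) =
        -(‖mvE (msqrt Az)⁻¹ (e1 n)‖⁻¹ • mvE (msqrt Az)⁻¹ (e1 n))) :
    (⨍ y in Metric.ball (0 : EucSp n) 1,
        f2 α C lam ε N (x + ε • mvE (msqrt Ax) y) (z + ε • mvE (msqrt Az * Q) y)) ≥
      ((3 : ℝ) ^ (-(n : ℝ) / 2) * (1 / 300) ^ n) * C ^ 2 * f2 α C lam ε N x z :=
  stmt11_general lam Lam hlam h3 α ε hε C hC N Ax Az hAx hAz x z hxz hlo hhi Q hQ hQv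

end
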